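/- Let a > 0, Ω = (−a,a), T̂ > 0, and A > 0. Let (ε_k) be a sequence of positive numbers with ε_k → 0, and let h_k : [−a,a] × [0,T̂] → ℝ be continuous functions with |h_k| ≤ A for all k, converging uniformly on [−a,a] × [0,T̂] to a function h. Suppose there is B < ∞ with ∫_{−a}^{a} G_{ε_k}(h_k(x,t)) dx ≤ B for all k and all t ∈ [0,T̂]. Then h(x,t) ≥ 0 for all (x,t) ∈ [−a,a] × [0,T̂], and for every t ∈ [0,T̂] the set { x ∈ (−a,a) : h(x,t) = 0 } has Lebesgue measure zero. -/

import Mathlib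

/-!
If `h(·, t) ≤ 0` on a set `S` of positive measure, then for every `δ > 0` and all large `k`
we have `h_k(·, t) ≤ δ` on `S` and `ε_k ≤ δ³`. Since `G_ε` is nonnegative and nonincreasing on
`(-∞, A]`, and `G_ε(δ) ≥ 2 / (65 δ)` once `ε ≤ δ³`, this gives
`B ≥ ∫ G_{ε_k}(h_k(·, t)) ≥ |S| · 2 / (65 δ)`, which is absurd for small `δ`. So `{h(·, t) ≤ 0}`
is null, and continuity of the uniform limit `h` turns this into `h ≥ 0` everywhere.
-/

/-- `g_ε(s) = -∫_s^A dr / (|r|³ + ε)`. -/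
noncomputable def gEps (A ε s : ℝ) : ℝ := -∫ r in s..A, 1 / (|r| ^ 3 + ε)

/-- `G_ε(s) = -∫_s^A g_ε(r) dr`. -/
noncomputable def GEps (A ε s : ℝ) : ℝ := -∫ r in s..A, gEps A ε r

open MeasureTheory Filter Topology Set intervalIntegral

theorem mul_sub_le_intervalIntegral_of_le {f : ℝ → ℝ} {a b c d C : ℝ} (hf : Continuous f)
    (hca : c ≤ a) (hab : a ≤ b) (hbd : b ≤ d) (hf₀ : ∀ x ∈ Icc c d, 0 ≤ f x)
    (hC : ∀ x ∈ Icc a b, C ≤ f x) :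
    C * (b - a) ≤ ∫ x in c..d, f x :=
  calc C * (b - a) = ∫ _ in a..b, C := by
        rw [intervalIntegral.integral_const, smul_eq_mul, mul_comm]
    _ ≤ ∫ x in a..b, f x := integral_mono_on hab intervalIntegrable_const
        (hf.intervalIntegrable a b) hC
    _ ≤ ∫ x in c..d, f x := integral_mono_interval hca hab hbd
        ((ae_restrict_iff' measurableSet_Ioc).2 <| .of_forall fun x hx ↦
          hf₀ x (Ioc_subset_Icc_self hx))
        (hf.intervalIntegrable c d)

section

variable {A ε : ℝ}

theorem continuous_one_div_abs_pow_three_add (hε : 0 < ε) :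
    Continuous fun r : ℝ ↦ 1 / (|r| ^ 3 + ε) :=
  continuous_const.div (by fun_prop) fun r ↦ by positivity

theorem continuous_gEps (hε : 0 < ε) : Continuous (gEps A ε) := by
  have : gEps A ε = fun s ↦ ∫ r in A..s, 1 / (|r| ^ 3 + ε) := by
    funext s; rw [gEps, integral_symm, neg_neg]
  rw [this]
  exact continuous_primitive
    (fun _ _ ↦ (continuous_one_div_abs_pow_three_add hε).intervalIntegrable _ _) A

theorem neg_gEps_nonneg (hε : 0 < ε) {r : ℝ} (hr : r ≤ A) : 0 ≤ -gEps A ε r := by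
  rw [gEps, neg_neg]
  exact integral_nonneg hr fun u _ ↦ by positivity

theorem GEps_eq_integral_neg_gEps (s : ℝ) : GEps A ε s = ∫ r in s..A, -gEps A ε r := by
  rw [GEps, intervalIntegral.integral_neg]

theorem antitoneOn_GEps (hε : 0 < ε) : AntitoneOn (GEps A ε) (Iic A) := by
  intro s _ t ht hst
  have hcont : Continuous fun r ↦ -gEps A ε r := (continuous_gEps hε).neg
  rw [GEps_eq_integral_neg_gEps, GEps_eq_integral_neg_gEps,
    ← integral_add_adjacent_intervals (hcont.intervalIntegrable s t)
      (hcont.intervalIntegrable t A)]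
  have : 0 ≤ ∫ r in s..t, -gEps A ε r :=
    integral_nonneg hst fun r hr ↦ neg_gEps_nonneg hε (hr.2.trans ht)
  linarith

theorem GEps_nonneg (hε : 0 < ε) {s : ℝ} (hs : s ≤ A) : 0 ≤ GEps A ε s := by
  have hA : GEps A ε A = 0 := by rw [GEps, integral_same, neg_zero]
  exact hA ▸ antitoneOn_GEps hε hs self_mem_Iic hs

theorem continuous_GEps (hε : 0 < ε) : Continuous (GEps A ε) := by
  have : GEps A ε = fun s ↦ ∫ r in A..s, gEps A ε r := by
    funext s; rw [GEps, integral_symm, neg_neg]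
  rw [this]
  exact continuous_primitive (fun _ _ ↦ (continuous_gEps hε).intervalIntegrable _ _) A

theorem two_div_le_neg_gEps {δ r : ℝ} (hε : 0 < ε) (hεδ : ε ≤ δ ^ 3) (hδ : 0 < δ)
    (hδA : 4 * δ ≤ A) (hr : r ≤ 2 * δ) : 2 / (65 * δ ^ 2) ≤ -gEps A ε r := by
  have hlower : ∀ u ∈ Icc (2 * δ) (4 * δ), 1 / (65 * δ ^ 3) ≤ 1 / (|u| ^ 3 + ε) := by
    intro u hu
    have hu₀ : 0 ≤ u := by linarith [hu.1]
    have : u ^ 3 ≤ (4 * δ) ^ 3 := pow_le_pow_left₀ hu₀ hu.2 3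
    rw [abs_of_nonneg hu₀]
    gcongr
    nlinarith
  rw [gEps, neg_neg]
  calc 2 / (65 * δ ^ 2) = 1 / (65 * δ ^ 3) * (4 * δ - 2 * δ) := by field_simp; ring
    _ ≤ ∫ u in r..A, 1 / (|u| ^ 3 + ε) :=
      mul_sub_le_intervalIntegral_of_le (continuous_one_div_abs_pow_three_add hε) hr
        (by linarith) hδA (fun u _ ↦ by positivity) hlower

theorem two_div_le_GEps {δ : ℝ} (hε : 0 < ε) (hεδ : ε ≤ δ ^ 3) (hδ : 0 < δ)
    (hδA : 4 * δ ≤ A) : 2 / (65 * δ) ≤ GEps A ε δ := by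
  rw [GEps_eq_integral_neg_gEps]
  calc 2 / (65 * δ) = 2 / (65 * δ ^ 2) * (2 * δ - δ) := by field_simp; ring
    _ ≤ ∫ r in δ..A, -gEps A ε r :=
      mul_sub_le_intervalIntegral_of_le (continuous_gEps hε).neg le_rfl (by linarith)
        (by linarith) (fun r hr ↦ neg_gEps_nonneg hε hr.2)
        fun r hr ↦ two_div_le_neg_gEps hε hεδ hδ hδA hr.2

theorem exists_forall_le_GEps (hA : 0 < A) (M : ℝ) :
    ∃ δ > 0, ∀ᶠ ε in 𝓝[>] 0, ∀ s ≤ δ, M ≤ GEps A ε s := by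
  have hlarge : Tendsto (fun δ : ℝ ↦ 2 / 65 * δ⁻¹) (𝓝[>] 0) atTop :=
    tendsto_inv_nhdsGT_zero.const_mul_atTop (by norm_num)
  have hsmall : ∀ᶠ δ in 𝓝[>] (0 : ℝ), δ ∈ Ioo 0 (A / 4) := Ioo_mem_nhdsGT (by positivity)
  obtain ⟨δ, ⟨hδ, hδA⟩, hM⟩ := (hsmall.and (hlarge.eventually_ge_atTop M)).exists
  refine ⟨δ, hδ, ?_⟩
  filter_upwards [Ioo_mem_nhdsGT (pow_pos hδ 3)] with ε hε s hs
  calc M ≤ 2 / (65 * δ) := by rwa [div_mul_eq_div_div, div_eq_mul_inv]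
    _ ≤ GEps A ε δ := two_div_le_GEps hε.1 hε.2.le hδ (by linarith)
    _ ≤ GEps A ε s :=
      antitoneOn_GEps hε.1 (hs.trans (by linarith)) (by simp only [mem_Iic]; linarith) hs

end

theorem measure_eq_zero_of_integral_GEps_le {X : Type*} [MeasurableSpace X] {μ : Measure X}
    [IsFiniteMeasure μ] {A B : ℝ} (hA : 0 < A) {εk : ℕ → ℝ} (hεpos : ∀ k, 0 < εk k)
    (hε : Tendsto εk atTop (𝓝 0)) {fk : ℕ → X → ℝ} {f : X → ℝ}
    (hle : ∀ k, ∀ᵐ x ∂μ, fk k x ≤ A)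
    (hint : ∀ k, Integrable (fun x ↦ GEps A (εk k) (fk k x)) μ)
    (hB : ∀ k, ∫ x, GEps A (εk k) (fk k x) ∂μ ≤ B)
    {S : Set X} (hS : MeasurableSet S) (hunif : TendstoUniformlyOn fk f atTop S)
    (hf : ∀ x ∈ S, f x ≤ 0) : μ S = 0 := by
  by_contra hS₀
  have hm : 0 < μ.real S := ENNReal.toReal_pos hS₀ (measure_ne_top μ S)
  obtain ⟨δ, hδ, hG⟩ := exists_forall_le_GEps hA ((B + 1) / μ.real S)
  have hε' : Tendsto εk atTop (𝓝[>] 0) := tendsto_nhdsWithin_iff.2 ⟨hε, .of_forall hεpos⟩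
  obtain ⟨k, hGk, hclose⟩ :=
    ((hε'.eventually hG).and (Metric.tendstoUniformlyOn_iff.1 hunif δ hδ)).exists
  have hbelow : ∀ x ∈ S, fk k x ≤ δ := fun x hx ↦ by
    have := hclose x hx
    rw [Real.dist_eq, abs_sub_lt_iff] at this
    linarith [hf x hx]
  have hnonneg : 0 ≤ᵐ[μ] fun x ↦ GEps A (εk k) (fk k x) := by
    filter_upwards [hle k] with x hx using GEps_nonneg (hεpos k) hx
  have := calc B + 1 = (B + 1) / μ.real S * μ.real S := by field_simp
    _ ≤ ∫ x in S, GEps A (εk k) (fk k x) ∂μ :=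
      setIntegral_ge_of_const_le_real hS (measure_ne_top μ S)
        (fun x hx ↦ hGk _ (hbelow x hx)) (hint k).integrableOn
    _ ≤ ∫ x, GEps A (εk k) (fk k x) ∂μ := setIntegral_le_integral (hint k) hnonneg
    _ ≤ B := hB k
  linarith

theorem volume_nonpos_eq_zero_of_intervalIntegral_GEps_le {a b A B : ℝ} (hab : a ≤ b)
    (hA : 0 < A) {εk : ℕ → ℝ} (hεpos : ∀ k, 0 < εk k) (hε : Tendsto εk atTop (𝓝 0))
    {fk : ℕ → ℝ → ℝ} {f : ℝ → ℝ}
    (hcont : ∀ k, ContinuousOn (fk k) (Icc a b)) (hle : ∀ k, ∀ x ∈ Icc a b, fk k x ≤ A)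
    (hunif : TendstoUniformlyOn fk f atTop (Icc a b))
    (hB : ∀ k, ∫ x in a..b, GEps A (εk k) (fk k x) ≤ B) :
    volume {x ∈ Icc a b | f x ≤ 0} = 0 := by
  have hf : ContinuousOn f (Icc a b) := hunif.continuousOn (.of_forall hcont)
  have hS : IsClosed {x ∈ Icc a b | f x ≤ 0} :=
    hf.preimage_isClosed_of_isClosed isClosed_Icc isClosed_Iic
  have hnull := measure_eq_zero_of_integral_GEps_le (μ := volume.restrict (Icc a b)) hA hεpos hε
    (fun k ↦ (ae_restrict_iff' measurableSet_Icc).2 (.of_forall (hle k)))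
    (fun k ↦ ((continuous_GEps (hεpos k)).comp_continuousOn (hcont k)).integrableOn_Icc)
    (fun k ↦ by
      rw [integral_Icc_eq_integral_Ioc, ← intervalIntegral.integral_of_le hab]; exact hB k)
    hS.measurableSet (hunif.mono fun x hx ↦ hx.1) fun x hx ↦ hx.2
  rwa [Measure.restrict_apply hS.measurableSet, inter_eq_left.2 fun x hx ↦ hx.1] at hnull

theorem ContinuousOn.nonneg_of_measure_neg_eq_zero {X : Type*} [TopologicalSpace X]
    [LinearOrder X] [OrderTopology X] [DenselyOrdered X] [MeasurableSpace X]
    [OpensMeasurableSpace X] {μ : Measure X} [μ.IsOpenPosMeasure] {a b : X} (hab : a ≠ b)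
    {f : X → ℝ} (hf : ContinuousOn f (Icc a b))
    (hnull : μ {x ∈ Icc a b | f x < 0} = 0) {x : X} (hx : x ∈ Icc a b) : 0 ≤ f x := by
  have hae : f =ᵐ[μ.restrict (Icc a b)] fun y ↦ max (f y) 0 := by
    rw [EventuallyEq, ae_restrict_iff' measurableSet_Icc]
    filter_upwards [measure_eq_zero_iff_ae_notMem.1 hnull] with y hy hyI
    exact (max_eq_left (not_lt.1 fun hneg ↦ hy ⟨hyI, hneg⟩)).symm
  rw [Measure.eqOn_Icc_of_ae_eq μ hab hae hf (hf.sup continuousOn_const) hx]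
  exact le_max_right _ _

theorem limit_nonneg_and_zero_set_null_general
    (a Thatt A B : ℝ) (ha : 0 < a) (hA : 0 < A)
    (εk : ℕ → ℝ) (hεpos : ∀ k, 0 < εk k)
    (hεlim : Filter.Tendsto εk Filter.atTop (nhds 0))
    (hk : ℕ → ℝ → ℝ → ℝ) (h : ℝ → ℝ → ℝ)
    (hcont : ∀ k, ContinuousOn (fun p : ℝ × ℝ => hk k p.1 p.2)
      (Set.Icc (-a) a ×ˢ Set.Icc 0 Thatt))
    (hbdd : ∀ k, ∀ x ∈ Set.Icc (-a) a, ∀ t ∈ Set.Icc (0:ℝ) Thatt, |hk k x t| ≤ A)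
    (hunif : TendstoUniformlyOn (fun k (p : ℝ × ℝ) => hk k p.1 p.2)
      (fun p : ℝ × ℝ => h p.1 p.2) Filter.atTop (Set.Icc (-a) a ×ˢ Set.Icc 0 Thatt))
    (hB : ∀ k, ∀ t ∈ Set.Icc (0:ℝ) Thatt,
      (∫ x in (-a)..a, GEps A (εk k) (hk k x t)) ≤ B) :
    (∀ x ∈ Set.Icc (-a) a, ∀ t ∈ Set.Icc (0:ℝ) Thatt, 0 ≤ h x t) ∧
    (∀ t ∈ Set.Icc (0:ℝ) Thatt,
      MeasureTheory.volume {x ∈ Set.Ioo (-a) a | h x t = 0} = 0) := by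
  have hmaps : ∀ t ∈ Icc 0 Thatt,
      MapsTo (fun x ↦ (x, t)) (Icc (-a) a) (Icc (-a) a ×ˢ Icc 0 Thatt) :=
    fun t ht x hx ↦ ⟨hx, ht⟩
  have hnull : ∀ t ∈ Icc 0 Thatt, volume {x ∈ Icc (-a) a | h x t ≤ 0} = 0 := fun t ht ↦
    volume_nonpos_eq_zero_of_intervalIntegral_GEps_le (by linarith) hA hεpos hεlim
      (fun k ↦ (hcont k).comp (by fun_prop) (hmaps t ht))
      (fun k x hx ↦ (abs_le.1 (hbdd k x hx t ht)).2)
      ((hunif.comp fun x ↦ (x, t)).mono (hmaps t ht)) (fun k ↦ hB k t ht)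
  have hcontH : ContinuousOn (fun p : ℝ × ℝ ↦ h p.1 p.2) (Icc (-a) a ×ˢ Icc 0 Thatt) :=
    hunif.continuousOn (.of_forall hcont)
  refine ⟨fun x hx t ht ↦ ?_, fun t ht ↦ measure_mono_null ?_ (hnull t ht)⟩
  · exact (hcontH.comp (by fun_prop) (hmaps t ht)).nonneg_of_measure_neg_eq_zero
      (by linarith : -a ≠ a)
      (measure_mono_null (by intro y hy; exact ⟨hy.1, hy.2.le⟩) (hnull t ht)) hx
  · exact fun x hx ↦ ⟨Ioo_subset_Icc_self hx.1, hx.2.le⟩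

/-- Nonnegativity of the uniform limit: if `h_k → h` uniformly, `|h_k| ≤ A`, `ε_k → 0⁺`,
and the entropies `∫ G_{ε_k}(h_k(·,t))` are uniformly bounded, then `h ≥ 0` and each
zero set `{x : h(x,t) = 0}` has measure zero. -/
theorem limit_nonneg_and_zero_set_null
    (a Thatt A B : ℝ) (ha : 0 < a) (hThatt : 0 < Thatt) (hA : 0 < A)
    (εk : ℕ → ℝ) (hεpos : ∀ k, 0 < εk k)
    (hεlim : Filter.Tendsto εk Filter.atTop (nhds 0))
    (hk : ℕ → ℝ → ℝ → ℝ) (h : ℝ → ℝ → ℝ)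
    (hcont : ∀ k, ContinuousOn (fun p : ℝ × ℝ => hk k p.1 p.2)
      (Set.Icc (-a) a ×ˢ Set.Icc 0 Thatt))
    (hbdd : ∀ k, ∀ x ∈ Set.Icc (-a) a, ∀ t ∈ Set.Icc (0:ℝ) Thatt, |hk k x t| ≤ A)
    (hunif : TendstoUniformlyOn (fun k (p : ℝ × ℝ) => hk k p.1 p.2)
      (fun p : ℝ × ℝ => h p.1 p.2) Filter.atTop (Set.Icc (-a) a ×ˢ Set.Icc 0 Thatt))
    (hB : ∀ k, ∀ t ∈ Set.Icc (0:ℝ) Thatt,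
      (∫ x in (-a)..a, GEps A (εk k) (hk k x t)) ≤ B) :
    (∀ x ∈ Set.Icc (-a) a, ∀ t ∈ Set.Icc (0:ℝ) Thatt, 0 ≤ h x t) ∧
    (∀ t ∈ Set.Icc (0:ℝ) Thatt,
      MeasureTheory.volume {x ∈ Set.Ioo (-a) a | h x t = 0} = 0) :=
  limit_nonneg_and_zero_set_null_general a Thatt A B ha hA εk hεpos hεlim hk h hcont hbdd hunif hB
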